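/- Let M be a finite subset of a countable group G, let V be a finite-dimensional vector space over a field k, and let S = L(V^M, V). Then for every s ∈ S^G, the linear NUCA σ_s : V^G → V^G is injective if and only if the dual linear NUCA σ_{s*} : (V*)^G → (V*)^G is post-surjective. -/

import Mathlib

open scoped BigOperators Pointwise

/-- The linear NUCA `σ_s : V^G → V^G` with memory `M ⊆ G` associated with the
configuration of local defining maps `s`, given in coefficient form:
`σ_s(x)(g) = ∑_{m ∈ M} s(g,m)(x(g·m))`. -/
def nucaMap {k V G : Type*} [Field k] [AddCommGroup V] [Module k V] [Group G]
    (M : Finset G) (s : G → G → (V →ₗ[k] V)) (x : G → V) : G → V :=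
  fun g => ∑ m ∈ M, s g m (x (g * m))

/-- Two configurations are asymptotic if they agree outside a finite set. -/
def Asymptotic {G A : Type*} (x y : G → A) : Prop :=
  Set.Finite {g : G | x g ≠ y g}

/-- A map `σ : V^G → V^G` is pre-injective if `σ(x) = σ(y)` implies `x = y` whenever
`x` and `y` are asymptotic. -/
def PreInjective {G V : Type*} (σ : (G → V) → (G → V)) : Prop :=
  ∀ x y : G → V, Asymptotic x y → σ x = σ y → x = y

/-- A map `σ : V^G → V^G` is post-surjective if for all `x, y` with `y` asymptotic to
`σ(x)` there is `z` asymptotic to `x` with `σ(z) = y`. -/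
def PostSurjective {G V : Type*} (σ : (G → V) → (G → V)) : Prop :=
  ∀ x y : G → V, Asymptotic y (σ x) → ∃ z : G → V, Asymptotic z x ∧ σ z = y

/-- The dual configuration `s*` of local defining maps, in coefficient form:
`s*(g,m) = (s(g·m, m⁻¹))ᵀ`, the transpose (dual map) of `s(g·m, m⁻¹)`. -/
def dualCoeff {k V G : Type*} [Field k] [AddCommGroup V] [Module k V] [Group G]
    (s : G → G → (V →ₗ[k] V)) :
    G → G → (Module.Dual k V →ₗ[k] Module.Dual k V) :=
  fun g m => (s (g * m) m⁻¹).dualMap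

section Aux
variable {k V G : Type*} [Field k] [AddCommGroup V] [Module k V] [Group G] [DecidableEq G]
  (M : Finset G) (s : G → G → (V →ₗ[k] V))

lemma nucaMap_add (x y : G → V) :
    nucaMap M s (x + y) = nucaMap M s x + nucaMap M s y := by
  funext g; simp [nucaMap, Finset.sum_add_distrib]

lemma nucaMap_zero : nucaMap M s (0 : G → V) = 0 := by
  funext g; simp [nucaMap]

noncomputable def Tmap : (G →₀ Module.Dual k V) →ₗ[k] (G →₀ Module.Dual k V) :=
  Finsupp.lsum k fun g => ∑ m ∈ M⁻¹, Finsupp.lsingle (g * m⁻¹) ∘ₗ dualCoeff s (g * m⁻¹) m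

lemma Tmap_coe (ω : G →₀ Module.Dual k V) :
    ⇑(Tmap M s ω) = nucaMap M⁻¹ (dualCoeff s) ⇑ω := by
  induction ω using Finsupp.induction_linear with
  | zero => simp [nucaMap_zero]
  | add f g hf hg =>
      rw [map_add]
      funext h
      simp only [Finsupp.add_apply, Finsupp.coe_add, nucaMap_add, Pi.add_apply, hf, hg]
  | single g v =>
      funext h
      rw [Tmap, Finsupp.lsum_single, LinearMap.sum_apply, Finsupp.finset_sum_apply]
      rw [nucaMap]
      refine Finset.sum_congr rfl fun m hm => ?_
      simp only [LinearMap.comp_apply, Finsupp.lsingle_apply]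
      by_cases hgm : g * m⁻¹ = h
      · have : h * m = g := by rw [← hgm, inv_mul_cancel_right]
        rw [hgm, Finsupp.single_eq_same, this, Finsupp.single_eq_same]
      · have : h * m ≠ g := fun hc => hgm (by rw [← hc, mul_inv_cancel_right])
        rw [Finsupp.single_eq_of_ne (Ne.symm hgm), Finsupp.single_eq_of_ne this, map_zero]

noncomputable def Bmap (x : G → V) : (G →₀ Module.Dual k V) →ₗ[k] k :=
  Finsupp.lsum k fun g => Module.Dual.eval k V (x g)

lemma Bmap_single (x : G → V) (g : G) (v : Module.Dual k V) :
    Bmap x (Finsupp.single g v) = v (x g) := by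
  rw [Bmap, Finsupp.lsum_single]; simp

lemma Bmap_adjoint (x : G → V) (ω : G →₀ Module.Dual k V) :
    Bmap x (Tmap M s ω) = Bmap (nucaMap M s x) ω := by
  have key : (Bmap x) ∘ₗ (Tmap M s) = Bmap (nucaMap M s x) := by
    apply Finsupp.lhom_ext
    intro g v
    simp only [LinearMap.comp_apply, Tmap, Finsupp.lsum_single, LinearMap.sum_apply,
      map_sum, Finsupp.lsingle_apply, Bmap_single]
    rw [nucaMap, map_sum]
    refine Finset.sum_nbij' (fun m => m⁻¹) (fun m => m⁻¹) ?_ ?_ ?_ ?_ ?_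
    · intro m hm; exact Finset.mem_inv'.mp hm
    · intro m hm; rw [Finset.mem_inv']; simpa using hm
    · intro m _; simp
    · intro m _; simp
    · intro m hm
      simp only [dualCoeff, LinearMap.dualMap_apply', LinearMap.comp_apply,
        inv_mul_cancel_right]
  exact LinearMap.congr_fun key ω

end Aux

section Main
variable {k V G : Type*} [Field k] [AddCommGroup V] [Module k V] [Group G] [DecidableEq G]
  (M : Finset G) (s : G → G → (V →ₗ[k] V))

lemma Bmap_zero : Bmap (k := k) (0 : G → V) = (0 : (G →₀ Module.Dual k V) →ₗ[k] k) := by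
  apply Finsupp.lhom_ext
  intro g v
  simp [Bmap_single]

lemma Tmap_surj_of_inj [FiniteDimensional k V]
    (hinj : Function.Injective (nucaMap M s)) :
    Function.Surjective (Tmap M s) := by
  rw [← LinearMap.range_eq_top]
  by_contra hne
  have hlt : (LinearMap.range (Tmap M s) : Submodule k (G →₀ Module.Dual k V)) <
      (⊤ : Submodule k (G →₀ Module.Dual k V)) :=
    lt_top_iff_ne_top.mpr hne
  obtain ⟨f, hf0, hfbot⟩ := Submodule.exists_dual_map_eq_bot_of_lt_top
    (M := G →₀ Module.Dual k V) (p := LinearMap.range (Tmap M s)) hlt inferInstance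
  set x : G → V := fun g => (Module.evalEquiv k V).symm (f ∘ₗ Finsupp.lsingle g) with hx
  have hBf : Bmap x = f := by
    apply Finsupp.lhom_ext
    intro g v
    rw [Bmap_single]
    have h1 : Module.Dual.eval k V (x g) = f ∘ₗ Finsupp.lsingle g :=
      (Module.evalEquiv k V).apply_symm_apply _
    simpa using LinearMap.congr_fun h1 v
  have hker : ∀ ω, f (Tmap M s ω) = 0 := by
    intro ω
    have hmem : f (Tmap M s ω) ∈ (LinearMap.range (Tmap M s)).map f :=
      Submodule.mem_map_of_mem ⟨ω, rfl⟩
    rwa [hfbot, Submodule.mem_bot] at hmem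
  have hsx : nucaMap M s x = 0 := by
    funext g
    rw [Pi.zero_apply, ← Module.forall_dual_apply_eq_zero_iff k]
    intro v
    have := Bmap_adjoint M s x (Finsupp.single g v)
    rw [hBf, hker, Bmap_single] at this
    exact this.symm
  have hx0 : x = 0 := hinj (by rw [hsx, nucaMap_zero])
  rw [hx0, Bmap_zero] at hBf
  exact hf0 hBf.symm
end Main


/-- A linear NUCA `σ_s` over a finite-dimensional vector space alphabet is
injective if and only if its dual `σ_{s*}` is post-surjective. -/
theorem stmt11 {k V G : Type*} [Field k] [AddCommGroup V] [Module k V]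
    [FiniteDimensional k V] [Group G] [Countable G] [DecidableEq G]
    (M : Finset G) (s : G → G → (V →ₗ[k] V)) (hs : ∀ g, ∀ m ∉ M, s g m = 0) :
    Function.Injective (nucaMap M s) ↔
      PostSurjective (nucaMap M⁻¹ (dualCoeff s)) := by
  constructor
  · intro hinj x y hasym
    have hsupp : (Function.support (fun g => y g - nucaMap M⁻¹ (dualCoeff s) x g)).Finite := by
      apply hasym.subset
      intro g hg
      simp only [Function.mem_support, ne_eq, sub_eq_zero] at hg
      exact hg
    set η := Finsupp.ofSupportFinite _ hsupp with hη
    obtain ⟨ω, hω⟩ := Tmap_surj_of_inj M s hinj η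
    refine ⟨x + ⇑ω, ?_, ?_⟩
    · apply Set.Finite.subset ω.finite_support
      intro g hg
      simp only [Set.mem_setOf_eq, Pi.add_apply] at hg
      simp only [Function.mem_support]
      intro h0
      exact hg (by rw [h0, add_zero])
    · rw [nucaMap_add]
      funext g
      have h1 : (Tmap M s ω) g = η g := by rw [hω]
      rw [Tmap_coe] at h1
      have h2 : η g = y g - nucaMap M⁻¹ (dualCoeff s) x g := by
        rw [hη, Finsupp.ofSupportFinite_coe]
      rw [Pi.add_apply, h1, h2, add_sub_cancel]
  · intro hpost
    have hsurj : Function.Surjective (Tmap (k := k) M s) := by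
      intro η
      obtain ⟨z, hz, hzeq⟩ := hpost 0 ⇑η (by
        unfold Asymptotic
        rw [nucaMap_zero]
        simp only [Pi.zero_apply, ne_eq]
        exact η.finite_support)
      have hzsupp : (Function.support z).Finite := by
        simpa [Asymptotic, Function.support] using hz
      refine ⟨Finsupp.ofSupportFinite z hzsupp, ?_⟩
      apply DFunLike.coe_injective
      show ⇑(Tmap M s (Finsupp.ofSupportFinite z hzsupp)) = ⇑η
      rw [Tmap_coe, Finsupp.ofSupportFinite_coe]
      exact hzeq
    intro x y hxy
    have hB : ∀ η : G →₀ Module.Dual k V, Bmap x η = Bmap y η := by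
      intro η
      obtain ⟨ω, rfl⟩ := hsurj η
      rw [Bmap_adjoint, Bmap_adjoint, hxy]
    funext g
    have hv : ∀ v : Module.Dual k V, v (x g - y g) = 0 := by
      intro v
      have h := hB (Finsupp.single g v)
      rw [Bmap_single, Bmap_single] at h
      rw [map_sub, h, sub_self]
    exact sub_eq_zero.mp ((Module.forall_dual_apply_eq_zero_iff k _).mp hv)
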